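/- If r₁ and r₂ are strongly normalising terms of Polymorphic System I (with respect to reduction → = ⇄* ∘ ↪ ∘ ⇄*), then the pair ⟨r₁,r₂⟩ is strongly normalising. -/

import Mathlib

/-- Types of Polymorphic System I: variables, arrows, conjunctions, universal types. -/
inductive Ty : Type
  | var : ℕ → Ty
  | arr : Ty → Ty → Ty
  | conj : Ty → Ty → Ty
  | all : ℕ → Ty → Ty
deriving DecidableEq

/-- Free type variables. -/
def ftv : Ty → Finset ℕ
  | .var X => {X}
  | .arr A B => ftv A ∪ ftv B
  | .conj A B => ftv A ∪ ftv B
  | .all X A => ftv A \ {X}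

/-- Type isomorphism ≡: the smallest congruence generated by the six isomorphisms of PSI. -/
inductive TyEquiv : Ty → Ty → Prop
  | comm (A B) : TyEquiv (.conj A B) (.conj B A)
  | assoc (A B C) : TyEquiv (.conj A (.conj B C)) (.conj (.conj A B) C)
  | distArr (A B C) : TyEquiv (.arr A (.conj B C)) (.conj (.arr A B) (.arr A C))
  | curry (A B C) : TyEquiv (.arr (.conj A B) C) (.arr A (.arr B C))
  | allArr (X A B) : X ∉ ftv A → TyEquiv (.all X (.arr A B)) (.arr A (.all X B))
  | allConj (X A B) : TyEquiv (.all X (.conj A B)) (.conj (.all X A) (.all X B))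
  | refl (A) : TyEquiv A A
  | symm {A B} : TyEquiv A B → TyEquiv B A
  | trans {A B C} : TyEquiv A B → TyEquiv B C → TyEquiv A C
  | congArr {A A' B B'} : TyEquiv A A' → TyEquiv B B' → TyEquiv (.arr A B) (.arr A' B')
  | congConj {A A' B B'} : TyEquiv A A' → TyEquiv B B' → TyEquiv (.conj A B) (.conj A' B')
  | congAll (X) {A B} : TyEquiv A B → TyEquiv (.all X A) (.all X B)

/-- Auxiliary for PF: turn ∀X⃗.(C ⇒ Y) into ∀X⃗.((A ∧ C) ⇒ Y). -/
def pushArr (A : Ty) : Ty → Ty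
  | .all X t => .all X (pushArr A t)
  | .arr C Y => .arr (.conj A C) Y
  | t => t

/-- Multiset of prime factors of a type. -/
def PF : Ty → Multiset Ty
  | .var X => {.var X}
  | .arr A B => (PF B).map (pushArr A)
  | .conj A B => PF A + PF B
  | .all X A => (PF A).map (.all X)

/-- Being of the form ∀X₁...∀Xₙ.(B ⇒ Y) with Y a type variable. -/
inductive IsPrimeForm : Ty → Prop
  | base (B Y) : IsPrimeForm (.arr B (.var Y))
  | step (X) {t} : IsPrimeForm t → IsPrimeForm (.all X t)

/-- Conjunction of a (nonempty) list of types, A₁ ∧ ... ∧ Aₙ. -/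
def conjList : List Ty → Ty
  | [] => .var 0
  | [A] => A
  | A :: l => .conj A (conjList l)

/-- ∀X₁...∀Xₙ.A -/
def allList (l : List ℕ) (A : Ty) : Ty := l.foldr .all A

/-- Substitution of a type for a type variable in a type. -/
def substTy (X : ℕ) (B : Ty) : Ty → Ty
  | .var Y => if Y = X then B else .var Y
  | .arr C D => .arr (substTy X B C) (substTy X B D)
  | .conj C D => .conj (substTy X B C) (substTy X B D)
  | .all Y C => if Y = X then .all Y C else .all Y (substTy X B C)

/-- Terms of PSI (Church style). -/
inductive Tm : Type
  | var : ℕ → Ty → Tm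
  | lam : ℕ → Ty → Tm → Tm
  | app : Tm → Tm → Tm
  | pair : Tm → Tm → Tm
  | proj : Ty → Tm → Tm
  | tlam : ℕ → Tm → Tm
  | tapp : Tm → Ty → Tm

/-- Substitution of a term for a term variable. -/
def substTm (x : ℕ) (s : Tm) : Tm → Tm
  | .var y A => if y = x then s else .var y A
  | .lam y A r => if y = x then .lam y A r else .lam y A (substTm x s r)
  | .app r t => .app (substTm x s r) (substTm x s t)
  | .pair r t => .pair (substTm x s r) (substTm x s t)
  | .proj A r => .proj A (substTm x s r)
  | .tlam X r => .tlam X (substTm x s r)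
  | .tapp r A => .tapp (substTm x s r) A

/-- Substitution of a type for a type variable in a term. -/
def substTyTm (X : ℕ) (B : Ty) : Tm → Tm
  | .var y A => .var y (substTy X B A)
  | .lam y A r => .lam y (substTy X B A) (substTyTm X B r)
  | .app r t => .app (substTyTm X B r) (substTyTm X B t)
  | .pair r t => .pair (substTyTm X B r) (substTyTm X B t)
  | .proj A r => .proj (substTy X B A) (substTyTm X B r)
  | .tlam Y r => if Y = X then .tlam Y r else .tlam Y (substTyTm X B r)
  | .tapp r A => .tapp (substTyTm X B r) (substTy X B A)

abbrev Ctx := List (ℕ × Ty)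

def ftvCtx (Γ : Ctx) : Finset ℕ := Γ.foldr (fun p s => ftv p.2 ∪ s) ∅

def substCtx (X : ℕ) (B : Ty) (Γ : Ctx) : Ctx := Γ.map (fun p => (p.1, substTy X B p.2))

/-- Typing relation of PSI. -/
inductive Typing : Ctx → Tm → Ty → Prop
  | ax {Γ x A} : (x, A) ∈ Γ → Typing Γ (.var x A) A
  | equiv {Γ r A B} : Typing Γ r A → TyEquiv A B → Typing Γ r B
  | arrI {Γ x A r B} : Typing ((x, A) :: Γ) r B → Typing Γ (.lam x A r) (.arr A B)
  | arrE {Γ r s A B} : Typing Γ r (.arr A B) → Typing Γ s A → Typing Γ (.app r s) B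
  | conjI {Γ r s A B} : Typing Γ r A → Typing Γ s B → Typing Γ (.pair r s) (.conj A B)
  | conjE {Γ r A B} : Typing Γ r (.conj A B) → Typing Γ (.proj A r) A
  | allI {Γ r X A} : Typing Γ r A → X ∉ ftvCtx Γ → Typing Γ (.tlam X r) (.all X A)
  | allE {Γ r X A B} : Typing Γ r (.all X A) → Typing Γ (.tapp r B) (substTy X B A)

/-- "r has type A" (context is redundant in Church style). -/
def HasTy (r : Tm) (A : Ty) : Prop := ∃ Γ, Typing Γ r A

/-- One-step structural equivalence ⇄ (symmetric, closed under all term contexts). -/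
inductive StEq : Tm → Tm → Prop
  | comm (r s) : StEq (.pair r s) (.pair s r)
  | assoc (r s t) : StEq (.pair r (.pair s t)) (.pair (.pair r s) t)
  | distLam (x A r s) : StEq (.lam x A (.pair r s)) (.pair (.lam x A r) (.lam x A s))
  | distApp (r s t) : StEq (.app (.pair r s) t) (.pair (.app r t) (.app s t))
  | curry (r s t) : StEq (.app r (.pair s t)) (.app (.app r s) t)
  | pcommII (X x A r) : X ∉ ftv A → StEq (.tlam X (.lam x A r)) (.lam x A (.tlam X r))
  | pcommEI (X x A B r) : X ∉ ftv A → StEq (.tapp (.lam x A r) B) (.lam x A (.tapp r B))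
  | pdistII (X r s) : StEq (.tlam X (.pair r s)) (.pair (.tlam X r) (.tlam X s))
  | pdistEI (r s A) : StEq (.tapp (.pair r s) A) (.pair (.tapp r A) (.tapp s A))
  | pdistIE (X A r) : StEq (.proj (.all X A) (.tlam X r)) (.tlam X (.proj A r))
  | pdistEE (X A B C r) : HasTy r (.all X (.conj B C)) →
      StEq (.tapp (.proj (.all X B) r) A) (.proj (substTy X A B) (.tapp r A))
  | symm {r s} : StEq r s → StEq s r
  | congLam (x A) {r s} : StEq r s → StEq (.lam x A r) (.lam x A s)
  | congAppL (t) {r s} : StEq r s → StEq (.app r t) (.app s t)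
  | congAppR (t) {r s} : StEq r s → StEq (.app t r) (.app t s)
  | congPairL (t) {r s} : StEq r s → StEq (.pair r t) (.pair s t)
  | congPairR (t) {r s} : StEq r s → StEq (.pair t r) (.pair t s)
  | congProj (A) {r s} : StEq r s → StEq (.proj A r) (.proj A s)
  | congTlam (X) {r s} : StEq r s → StEq (.tlam X r) (.tlam X s)
  | congTapp (A) {r s} : StEq r s → StEq (.tapp r A) (.tapp s A)

/-- One-step reduction ↪ (typed β-reductions and typed projection, closed under contexts). -/
inductive Red : Tm → Tm → Prop
  | beta (x A r s) : HasTy s A → Red (.app (.lam x A r) s) (substTm x s r)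
  | tbeta (X A r) : Red (.tapp (.tlam X r) A) (substTyTm X A r)
  | pi (A r s) : HasTy r A → Red (.proj A (.pair r s)) r
  | congLam (x A) {r s} : Red r s → Red (.lam x A r) (.lam x A s)
  | congAppL (t) {r s} : Red r s → Red (.app r t) (.app s t)
  | congAppR (t) {r s} : Red r s → Red (.app t r) (.app t s)
  | congPairL (t) {r s} : Red r s → Red (.pair r t) (.pair s t)
  | congPairR (t) {r s} : Red r s → Red (.pair t r) (.pair t s)
  | congProj (A) {r s} : Red r s → Red (.proj A r) (.proj A s)
  | congTlam (X) {r s} : Red r s → Red (.tlam X r) (.tlam X s)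
  | congTapp (A) {r s} : Red r s → Red (.tapp r A) (.tapp s A)

/-- ⇄*: reflexive-transitive closure of ⇄. -/
def SeqStar : Tm → Tm → Prop := Relation.ReflTransGen StEq

/-- The operational semantics → = ⇄* ∘ ↪ ∘ ⇄*. -/
def Step (r s : Tm) : Prop := ∃ r' s', SeqStar r r' ∧ Red r' s' ∧ SeqStar s' s

/-- Strong normalisation with respect to →. -/
def SN (r : Tm) : Prop := Acc (fun a b => Step b a) r

/-- The measure P on terms. -/
def Pm : Tm → ℕ
  | .var _ _ => 0
  | .lam _ _ r => Pm r
  | .app r _ => Pm r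
  | .pair r s => 1 + Pm r + Pm s
  | .proj _ r => Pm r
  | .tlam _ r => Pm r
  | .tapp r _ => Pm r

/-- The measure M on terms. -/
def Mm : Tm → ℕ
  | .var _ _ => 1
  | .lam _ _ r => 1 + Mm r + Pm r
  | .app r s => Mm r + Mm s + Pm r * Mm s
  | .pair r s => Mm r + Mm s
  | .proj _ r => 1 + Mm r + Pm r
  | .tlam _ r => 1 + Mm r + Pm r
  | .tapp r _ => 1 + Mm r + Pm r

/-!
Every term is structurally equivalent to the pairing of its components, the maximal non-pair
subterms along the spine of `λ`, left application, `Λ` and type application. Structural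
equivalence preserves the multiset of components up to `⇄*` componentwise, and a `↪`-step
reduces the components in parallel, each in at most one step and at least one properly. Hence a
step out of `⟨a, b⟩` is, up to `⇄*`, a nonempty reduction sequence of one of `a`, `b` together
with a possibly empty one of the other, and induction along the game sum of `→⁺` on `a` and on
`b` finishes the proof.
-/

open Relation

namespace SeqStar

variable {a a' b b' c : Tm}

theorem single (h : StEq a b) : SeqStar a b := ReflTransGen.single h

theorem symm (h : SeqStar a b) : SeqStar b a := by
  induction h with
  | refl => exact .refl
  | tail _ h ih => exact ih.head h.symm

theorem trans (h₁ : SeqStar a b) (h₂ : SeqStar b c) : SeqStar a c :=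
  ReflTransGen.trans h₁ h₂

theorem map (f : Tm → Tm) (hf : ∀ {a b}, StEq a b → StEq (f a) (f b)) (h : SeqStar a b) :
    SeqStar (f a) (f b) :=
  ReflTransGen.lift f (fun _ _ => hf) _ _ h

theorem pair (ha : SeqStar a a') (hb : SeqStar b b') : SeqStar (.pair a b) (.pair a' b') :=
  (ha.map (.pair · b) (.congPairL b)).trans (hb.map (.pair a') (.congPairR a'))

instance : IsTrans Tm SeqStar := ⟨fun _ _ _ => trans⟩

end SeqStar

section Step

variable {a a' b b' c : Tm}

theorem Step.of_red (h : Red a b) : Step a b := ⟨a, b, .refl, h, .refl⟩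

theorem SeqStar.trans_step (h : SeqStar a b) (hs : Step b c) : Step a c :=
  let ⟨u, v, hu, huv, hv⟩ := hs
  ⟨u, v, h.trans hu, huv, hv⟩

theorem Step.trans_seqStar (hs : Step a b) (h : SeqStar b c) : Step a c :=
  let ⟨u, v, hu, huv, hv⟩ := hs
  ⟨u, v, hu, huv, hv.trans h⟩

theorem SeqStar.trans_transGen (h : SeqStar a b) (hs : TransGen Step b c) : TransGen Step a c := by
  induction hs with
  | single hs => exact .single (h.trans_step hs)
  | tail _ hs ih => exact ih.tail hs

theorem Relation.TransGen.trans_seqStar (hs : TransGen Step a b) (h : SeqStar b c) :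
    TransGen Step a c := by
  cases hs with
  | single hs => exact .single (hs.trans_seqStar h)
  | tail hs hs' => exact hs.tail (hs'.trans_seqStar h)

theorem Step.map (f : Tm → Tm) (hE : ∀ {a b}, StEq a b → StEq (f a) (f b))
    (hR : ∀ {a b}, Red a b → Red (f a) (f b)) (h : Step a b) : Step (f a) (f b) :=
  let ⟨u, v, hu, huv, hv⟩ := h
  ⟨f u, f v, hu.map f hE, hR huv, hv.map f hE⟩

theorem Step.pair_left (h : Step a a') (b : Tm) : Step (.pair a b) (.pair a' b) :=
  h.map (.pair · b) (.congPairL b) (.congPairL b)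

theorem Step.pair_right (a : Tm) (h : Step b b') : Step (.pair a b) (.pair a b') :=
  h.map (.pair a) (.congPairR a) (.congPairR a)

end Step

def Reach : Tm → Tm → Prop := ReflTransGen fun a b => Step a b ∨ StEq a b

namespace Reach

variable {a a' b b' c : Tm}

theorem trans (h₁ : Reach a b) (h₂ : Reach b c) : Reach a c := ReflTransGen.trans h₁ h₂

theorem of_seqStar (h : SeqStar a b) : Reach a b := ReflTransGen.mono (fun _ _ => .inr) _ _ h

theorem of_step (h : Step a b) : Reach a b := ReflTransGen.single (.inl h)

theorem pair (ha : Reach a a') (hb : Reach b b') : Reach (.pair a b) (.pair a' b') := by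
  refine ReflTransGen.trans (ReflTransGen.lift (Tm.pair · b) ?_ _ _ ha)
    (ReflTransGen.lift (Tm.pair a') ?_ _ _ hb)
  · exact fun _ _ h => h.imp (·.pair_left b) (.congPairL b)
  · exact fun _ _ h => h.imp (Step.pair_right a') (.congPairR a')

end Reach

theorem Step.transGen_of_reach {a b c : Tm} (hs : Step a b) (h : Reach b c) :
    TransGen Step a c := by
  induction h with
  | refl => exact .single hs
  | tail _ h ih => exact h.elim ih.tail (ih.trans_seqStar <| .single ·)

namespace SN

variable {a b : Tm}

theorem of_step (h : SN a) (hs : Step a b) : SN b := h.inv hs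

theorem of_reach (h : SN a) (hr : Reach a b) : SN b := by
  induction hr with
  | refl => exact h
  | tail _ hs ih =>
    exact hs.elim ih.of_step fun he =>
      ⟨_, fun _ ht => ih.inv ((SeqStar.single he).trans_step ht)⟩

theorem acc_transGen (h : SN a) : Acc (flip (TransGen Step)) a :=
  Subrelation.accessible transGen_swap.mpr h.transGen

end SN

def components : Tm → Multiset Tm
  | .var x A => {.var x A}
  | .lam x A r => (components r).map (.lam x A)
  | .app r t => (components r).map (.app · t)
  | .pair r s => components r + components s
  | .proj A r => {.proj A r}
  | .tlam X r => (components r).map (.tlam X)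
  | .tapp r A => (components r).map (.tapp · A)

theorem components_ne_zero (t : Tm) : components t ≠ 0 := by
  induction t <;> simp_all [components]

theorem components_eq_singleton_of_mem {t c : Tm} (hc : c ∈ components t) :
    components c = {c} := by
  induction t generalizing c with
  | var | proj => simp_all [components]
  | pair r s ihr ihs => exact (Multiset.mem_add.mp hc).elim ihr ihs
  | lam _ _ r ih | app r _ ih _ | tlam _ r ih | tapp r _ ih =>
    obtain ⟨d, hd, rfl⟩ := Multiset.mem_map.mp hc
    simp [components, ih hd]

theorem bind_components_components (t : Tm) : (components t).bind components = components t := by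
  rw [Multiset.bind_congr fun _ => components_eq_singleton_of_mem, Multiset.bind_singleton,
    Multiset.map_id']

theorem bind_components_of_forall_eq {t : Tm} {f : Tm → Tm}
    (hf : ∀ c ∈ components t, f c = c) :
    ((components t).bind fun c => components (f c)) = components t := by
  rw [Multiset.bind_congr fun c hc => congrArg components (hf c hc), bind_components_components]

structure IsSpine (K : Tm → Tm) : Prop where
  components_eq : ∀ r, components (K r) = (components r).map K
  stEq : ∀ {r s}, StEq r s → StEq (K r) (K s)
  red : ∀ {r s}, Red r s → Red (K r) (K s)
  pair : ∀ r s, StEq (K (.pair r s)) (.pair (K r) (K s))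

namespace IsSpine

theorem lam (x : ℕ) (A : Ty) : IsSpine (.lam x A) :=
  ⟨fun _ => rfl, .congLam x A, .congLam x A, .distLam x A⟩

theorem app (t : Tm) : IsSpine (.app · t) :=
  ⟨fun _ => rfl, .congAppL t, .congAppL t, fun r s => .distApp r s t⟩

theorem tlam (X : ℕ) : IsSpine (.tlam X) :=
  ⟨fun _ => rfl, .congTlam X, .congTlam X, .pdistII X⟩

theorem tapp (A : Ty) : IsSpine (.tapp · A) :=
  ⟨fun _ => rfl, .congTapp A, .congTapp A, fun r s => .pdistEI r s A⟩

end IsSpine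

theorem components_substTm (x : ℕ) (s t : Tm) :
    components (substTm x s t) = (components t).bind fun c => components (substTm x s c) := by
  induction t with
  | var y A => by_cases h : y = x <;> simp [components, substTm, h]
  | pair r w ihr ihw => simp [substTm, components, ihr, ihw, Multiset.add_bind]
  | proj A r => simp [substTm, components]
  | lam y A r ih =>
    by_cases h : y = x
    · subst h
      rw [bind_components_of_forall_eq] <;> simp [components, substTm]
    · simp [substTm, h, components, ih, Multiset.bind_map, Multiset.map_bind]
  | app r w ih _ | tlam _ r ih | tapp r _ ih =>
    simp [substTm, components, ih, Multiset.bind_map, Multiset.map_bind]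

theorem components_substTyTm (X : ℕ) (B : Ty) (t : Tm) :
    components (substTyTm X B t) =
      (components t).bind fun c => components (substTyTm X B c) := by
  induction t with
  | var | proj => simp [substTyTm, components]
  | pair r w ihr ihw => simp [substTyTm, components, ihr, ihw, Multiset.add_bind]
  | tlam Y r ih =>
    by_cases h : Y = X
    · subst h
      rw [bind_components_of_forall_eq] <;> simp [components, substTyTm]
    · simp [substTyTm, h, components, ih, Multiset.bind_map, Multiset.map_bind]
  | lam _ _ r ih | app r w ih _ | tapp r _ ih =>
    simp [substTyTm, components, ih, Multiset.bind_map, Multiset.map_bind]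

section Components

open Multiset

variable {t u : Tm}

theorem rel_seqStar_of_eq {M N : Multiset Tm} (h : M = N) : Rel SeqStar M N :=
  h ▸ rel_refl_of_refl_on fun _ _ => .refl

theorem rel_seqStar_map {α : Type*} {M : Multiset α} {f g : α → Tm}
    (h : ∀ c ∈ M, SeqStar (f c) (g c)) : Rel SeqStar (M.map f) (M.map g) :=
  rel_map.mpr (rel_refl_of_refl_on h)

theorem IsSpine.rel_components {K : Tm → Tm} (hK : IsSpine K)
    (h : Rel SeqStar (components t) (components u)) :
    Rel SeqStar (components (K t)) (components (K u)) := by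
  rw [hK.components_eq, hK.components_eq]
  exact rel_map.mpr (h.mono fun _ _ _ _ h => h.map K hK.stEq)

theorem components_stEq (h : StEq t u) : Rel SeqStar (components t) (components u) := by
  induction h with
  | comm => exact rel_seqStar_of_eq (add_comm _ _)
  | assoc => exact rel_seqStar_of_eq (add_assoc _ _ _).symm
  | distLam | distApp | pdistII | pdistEI => exact rel_seqStar_of_eq (by simp [components])
  | curry r s w =>
    simp only [components, Multiset.map_map]
    exact rel_seqStar_map fun c _ => .single (.curry c s w)
  | pcommII X x A r hX =>
    simp only [components, Multiset.map_map]
    exact rel_seqStar_map fun c _ => .single (.pcommII X x A c hX)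
  | pcommEI X x A B r hX =>
    simp only [components, Multiset.map_map]
    exact rel_seqStar_map fun c _ => .single (.pcommEI X x A B c hX)
  | pdistIE X A r => exact rel_seqStar_map (M := {()}) fun _ _ => .single (.pdistIE X A r)
  | pdistEE X A B C r hr =>
    exact rel_seqStar_map (M := {()}) fun _ _ => .single (.pdistEE X A B C r hr)
  | congAppR w h => exact rel_seqStar_map fun c _ => .single (.congAppR c h)
  | congProj A h => exact rel_seqStar_map (M := {()}) fun _ _ => .single (.congProj A h)
  | symm _ ih => exact (rel_flip.mpr ih).mono fun _ _ _ _ h => h.symm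
  | congPairL w _ ih => exact ih.add (rel_seqStar_of_eq rfl)
  | congPairR w _ ih => exact (rel_seqStar_of_eq rfl).add ih
  | congLam x A _ ih => exact (IsSpine.lam x A).rel_components ih
  | congAppL w _ ih => exact (IsSpine.app w).rel_components ih
  | congTlam X _ ih => exact (IsSpine.tlam X).rel_components ih
  | congTapp A _ ih => exact (IsSpine.tapp A).rel_components ih

theorem components_seqStar (h : SeqStar t u) : Rel SeqStar (components t) (components u) := by
  induction h with
  | refl => exact rel_seqStar_of_eq rfl
  | tail _ h ih => exact ih.trans _ (components_stEq h)

end Components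

def ParRed (M N : Multiset Tm) : Prop :=
  ∃ C : Multiset (Tm × Tm), C.map Prod.fst = M ∧ (C.bind fun p => components p.2) = N ∧
    (∀ p ∈ C, Red p.1 p.2 ∨ p.1 = p.2) ∧ ∃ p ∈ C, Red p.1 p.2

namespace ParRed

open Multiset

variable {M N : Multiset Tm}

theorem of_forall_red {α : Type*} {M : Multiset α} (hM : M ≠ 0) (f g : α → Tm)
    (h : ∀ a ∈ M, Red (f a) (g a)) : ParRed (M.map f) (M.bind fun a => components (g a)) := by
  obtain ⟨a, ha⟩ := exists_mem_of_ne_zero hM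
  refine ⟨M.map fun a => (f a, g a), by simp, by simp [bind_map], ?_,
    ⟨_, mem_map_of_mem _ ha, h a ha⟩⟩
  simp only [mem_map]
  rintro _ ⟨a, ha, rfl⟩
  exact .inl (h a ha)

theorem singleton {u v : Tm} (h : Red u v) : ParRed {u} (components v) := by
  simpa using of_forall_red (M := {()}) (by simp) (fun _ => u) (fun _ => v) fun _ _ => h

theorem map {K : Tm → Tm} (hK : IsSpine K) (h : ParRed M N) : ParRed (M.map K) (N.map K) := by
  obtain ⟨C, hM, hN, hC, p, hp, hred⟩ := h
  refine ⟨C.map (Prod.map K K), ?_, ?_, ?_, ⟨_, mem_map_of_mem _ hp, hK.red hred⟩⟩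
  · simp [← hM, Multiset.map_map]
  · simp [← hN, bind_map, map_bind, hK.components_eq]
  · simp only [mem_map]
    rintro _ ⟨q, hq, rfl⟩
    exact (hC q hq).imp hK.red (congrArg K)

theorem add_left {P : Multiset Tm} (hP : ∀ c ∈ P, components c = {c}) (h : ParRed M N) :
    ParRed (P + M) (P + N) := by
  obtain ⟨C, hM, hN, hC, p, hp, hred⟩ := h
  refine ⟨P.map (fun c => (c, c)) + C, ?_, ?_, ?_, ⟨p, mem_add.mpr (.inr hp), hred⟩⟩
  · simp [hM]
  · rw [add_bind, hN, bind_map]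
    exact congrArg (· + N) ((bind_congr hP).trans ((bind_singleton P id).trans (map_id P)))
  · simp only [mem_add, mem_map]
    rintro _ (⟨c, -, rfl⟩ | hq)
    exacts [.inr rfl, hC _ hq]

theorem add_right {P : Multiset Tm} (hP : ∀ c ∈ P, components c = {c}) (h : ParRed M N) :
    ParRed (M + P) (N + P) := by
  rw [add_comm M, add_comm N]
  exact h.add_left hP

end ParRed

theorem components_red {u v : Tm} (h : Red u v) : ParRed (components u) (components v) := by
  induction h with
  | beta x A r s hs =>
    rw [components_substTm]
    simpa [components, Multiset.map_map] using ParRed.of_forall_red (components_ne_zero r)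
      (fun c => .app (.lam x A c) s) (substTm x s) fun c _ => .beta x A c s hs
  | tbeta X A r =>
    rw [components_substTyTm]
    simpa [components, Multiset.map_map] using ParRed.of_forall_red (components_ne_zero r)
      (fun c => .tapp (.tlam X c) A) (substTyTm X A) fun c _ => .tbeta X A c
  | pi A r s hr => exact .singleton (.pi A r s hr)
  | congProj A h => exact .singleton (.congProj A h)
  | @congAppR t r s h =>
    have := ParRed.of_forall_red (components_ne_zero t) (.app · r) (.app · s)
      fun c _ => .congAppR c h
    simpa [components, ← Multiset.map_bind, bind_components_components] using this
  | congPairL t _ ih => exact ih.add_right fun _ => components_eq_singleton_of_mem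
  | congPairR t _ ih => exact ih.add_left fun _ => components_eq_singleton_of_mem
  | congLam x A _ ih => exact ih.map (.lam x A)
  | congAppL t _ ih => exact ih.map (.app t)
  | congTlam X _ ih => exact ih.map (.tlam X)
  | congTapp A _ ih => exact ih.map (.tapp A)

/-- The value at `[]` is junk. -/
def pairList : List Tm → Tm
  | [] => .var 0 (.var 0)
  | [a] => a
  | a :: l => .pair a (pairList l)

theorem pairList_cons (a : Tm) {l : List Tm} (hl : l ≠ []) :
    pairList (a :: l) = .pair a (pairList l) := by
  cases l with
  | nil => exact absurd rfl hl
  | cons => rfl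

theorem pairList_perm {l l' : List Tm} (h : l.Perm l') : SeqStar (pairList l) (pairList l') := by
  induction h with
  | nil => exact .refl
  | @cons a l l' h ih =>
    rcases eq_or_ne l [] with rfl | hl
    · rw [List.Perm.nil_eq h]
      exact .refl
    · rw [pairList_cons a hl, pairList_cons a fun h' => hl (h' ▸ h).eq_nil]
      exact SeqStar.pair .refl ih
  | @swap a b l =>
    rcases eq_or_ne l [] with rfl | hl
    · exact .single (.comm b a)
    · simp only [pairList_cons _ (List.cons_ne_nil _ _), pairList_cons _ hl]
      exact (SeqStar.single (.assoc b a _)).trans <|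
        (SeqStar.single (.congPairL _ (.comm b a))).trans (.single (.symm (.assoc a b _)))
  | trans _ _ ih₁ ih₂ => exact ih₁.trans ih₂

theorem components_pairList {l : List Tm} (hl : l ≠ []) :
    components (pairList l) = (l : Multiset Tm).bind components := by
  induction l with
  | nil => exact absurd rfl hl
  | cons a l ih =>
    rcases eq_or_ne l [] with rfl | hl'
    · simp [pairList]
    · rw [pairList_cons a hl', components, ih hl', ← Multiset.cons_coe, Multiset.cons_bind]

noncomputable def pairMultiset (M : Multiset Tm) : Tm := pairList M.toList

section PairMultiset

open Multiset

variable {M N : Multiset Tm}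

theorem pairMultiset_singleton (a : Tm) : pairMultiset {a} = a := by
  simp [pairMultiset, pairList]

theorem seqStar_pairMultiset_cons (a : Tm) (hM : M ≠ 0) :
    SeqStar (pairMultiset (a ::ₘ M)) (.pair a (pairMultiset M)) := by
  rw [pairMultiset, pairMultiset, ← pairList_cons a (by simpa using hM)]
  exact pairList_perm (coe_eq_coe.mp (by rw [coe_toList, ← cons_coe, coe_toList]))

theorem components_pairMultiset (hM : M ≠ 0) :
    components (pairMultiset M) = M.bind components := by
  rw [pairMultiset, components_pairList (by simpa using hM), coe_toList]

theorem pairMultiset_rel {R : Tm → Tm → Prop}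
    (hpair : ∀ {a a' b b'}, R a a' → R b b' → R (.pair a b) (.pair a' b'))
    (hseqStar : ∀ {a b}, SeqStar a b → R a b) (htrans : ∀ {a b c}, R a b → R b c → R a c)
    (h : Rel R M N) : R (pairMultiset M) (pairMultiset N) := by
  induction h with
  | zero => exact hseqStar .refl
  | @cons a b M N hab hMN ih =>
    rcases eq_or_ne M 0 with rfl | hM
    · rw [rel_zero_left.mp hMN, cons_zero, cons_zero, pairMultiset_singleton,
        pairMultiset_singleton]
      exact hab
    · have hN : N ≠ 0 := fun hN => hM (rel_zero_right.mp (hN ▸ hMN))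
      exact htrans (hseqStar (seqStar_pairMultiset_cons a hM))
        (htrans (hpair hab ih) (hseqStar (seqStar_pairMultiset_cons b hN).symm))

theorem seqStar_pairMultiset_add (hM : M ≠ 0) (hN : N ≠ 0) :
    SeqStar (pairMultiset (M + N)) (.pair (pairMultiset M) (pairMultiset N)) := by
  induction M using Multiset.induction with
  | empty => exact absurd rfl hM
  | cons a M ih =>
    rcases eq_or_ne M 0 with rfl | hM'
    · simpa [pairMultiset_singleton] using seqStar_pairMultiset_cons a hN
    · rw [cons_add]
      refine (seqStar_pairMultiset_cons a (by simp [hM'])).trans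
        ((SeqStar.pair .refl (ih hM')).trans ?_)
      exact (SeqStar.single (.assoc _ _ _)).trans
        (.pair (seqStar_pairMultiset_cons a hM').symm .refl)

theorem IsSpine.seqStar_pairMultiset_map {K : Tm → Tm} (hK : IsSpine K) (hM : M ≠ 0) :
    SeqStar (pairMultiset (M.map K)) (K (pairMultiset M)) := by
  induction M using Multiset.induction with
  | empty => exact absurd rfl hM
  | cons a M ih =>
    rcases eq_or_ne M 0 with rfl | hM'
    · simp [pairMultiset_singleton]
      exact .refl
    · rw [map_cons]
      refine (seqStar_pairMultiset_cons _ (by simpa using hM')).trans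
        ((SeqStar.pair .refl (ih hM')).trans ?_)
      exact (SeqStar.single (hK.pair _ _).symm).trans
        ((seqStar_pairMultiset_cons a hM').symm.map K hK.stEq)

end PairMultiset

section Decomposition

open Multiset

theorem IsSpine.seqStar_pairMultiset_components {K : Tm → Tm} (hK : IsSpine K) {r : Tm}
    (h : SeqStar r (pairMultiset (components r))) :
    SeqStar (K r) (pairMultiset (components (K r))) := by
  rw [hK.components_eq]
  exact (h.map K hK.stEq).trans (hK.seqStar_pairMultiset_map (components_ne_zero r)).symm

theorem seqStar_pairMultiset_components (t : Tm) : SeqStar t (pairMultiset (components t)) := by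
  induction t with
  | var | proj => simpa [components, pairMultiset_singleton] using .refl
  | pair r s ihr ihs =>
    exact (ihr.pair ihs).trans
      (seqStar_pairMultiset_add (components_ne_zero r) (components_ne_zero s)).symm
  | lam x A r ih => exact (IsSpine.lam x A).seqStar_pairMultiset_components ih
  | app r w ih _ => exact (IsSpine.app w).seqStar_pairMultiset_components ih
  | tlam X r ih => exact (IsSpine.tlam X).seqStar_pairMultiset_components ih
  | tapp r A ih => exact (IsSpine.tapp A).seqStar_pairMultiset_components ih

theorem seqStar_pairMultiset_of_rel {t : Tm} {M : Multiset Tm}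
    (h : Rel SeqStar (components t) M) : SeqStar t (pairMultiset M) :=
  (seqStar_pairMultiset_components t).trans (pairMultiset_rel .pair id .trans h)

theorem seqStar_of_components_eq {t u : Tm} (h : components t = components u) : SeqStar t u :=
  seqStar_pairMultiset_of_rel (h ▸ rel_seqStar_of_eq rfl) |>.trans
    (seqStar_pairMultiset_components u).symm

variable {C : Multiset (Tm × Tm)}

theorem reach_pairMultiset_map (hC : ∀ p ∈ C, Red p.1 p.2 ∨ p.1 = p.2) :
    Reach (pairMultiset (C.map Prod.fst)) (pairMultiset (C.map Prod.snd)) := by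
  refine pairMultiset_rel Reach.pair Reach.of_seqStar Reach.trans
    (rel_map.mpr (rel_refl_of_refl_on fun p hp => ?_))
  rcases hC p hp with h | h
  exacts [.of_step (.of_red h), h ▸ .refl]

theorem Step.pairMultiset_cons {a b : Tm} (h : Step a b) (M : Multiset Tm) :
    Step (pairMultiset (a ::ₘ M)) (pairMultiset (b ::ₘ M)) := by
  rcases eq_or_ne M 0 with rfl | hM
  · simpa [pairMultiset_singleton] using h
  · exact (seqStar_pairMultiset_cons a hM).trans_step ((h.pair_left _).trans_seqStar
      (seqStar_pairMultiset_cons b hM).symm)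

theorem transGen_pairMultiset_map (hC : ∀ p ∈ C, Red p.1 p.2 ∨ p.1 = p.2) {p : Tm × Tm}
    (hp : p ∈ C) (hred : Red p.1 p.2) :
    TransGen Step (pairMultiset (C.map Prod.fst)) (pairMultiset (C.map Prod.snd)) := by
  obtain ⟨C, rfl⟩ := exists_cons_of_mem hp
  have hC' : ∀ q ∈ (p.2, p.2) ::ₘ C, Red q.1 q.2 ∨ q.1 = q.2 := by
    simpa using fun q hq => hC q (mem_cons_of_mem hq)
  have hreach := reach_pairMultiset_map hC'
  simp only [map_cons] at hreach ⊢
  exact ((Step.of_red hred).pairMultiset_cons _).transGen_of_reach hreach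

theorem components_pairMultiset_map_snd {a : Tm}
    (hCa : Rel (fun c q => SeqStar c q.1) (components a) C) :
    components (pairMultiset (C.map Prod.snd)) = C.bind fun p => components p.2 := by
  have hC0 : C.map Prod.snd ≠ 0 := by
    simpa [← card_eq_zero, ← card_eq_card_of_rel hCa] using components_ne_zero a
  rw [components_pairMultiset hC0, bind_map]

theorem reach_pairMultiset_map_snd {a : Tm}
    (hCa : Rel (fun c q => SeqStar c q.1) (components a) C)
    (hC : ∀ p ∈ C, Red p.1 p.2 ∨ p.1 = p.2) : Reach a (pairMultiset (C.map Prod.snd)) :=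
  (Reach.of_seqStar (seqStar_pairMultiset_of_rel (rel_map_right.mpr hCa))).trans
    (reach_pairMultiset_map hC)

theorem transGen_pairMultiset_map_snd {a : Tm}
    (hCa : Rel (fun c q => SeqStar c q.1) (components a) C)
    (hC : ∀ p ∈ C, Red p.1 p.2 ∨ p.1 = p.2) {p : Tm × Tm} (hp : p ∈ C)
    (hred : Red p.1 p.2) : TransGen Step a (pairMultiset (C.map Prod.snd)) :=
  (seqStar_pairMultiset_of_rel (rel_map_right.mpr hCa)).trans_transGen
    (transGen_pairMultiset_map hC hp hred)

theorem exists_gameAdd_reach_of_step_pair {a b t : Tm} (h : Step (.pair a b) t) :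
    ∃ a' b', Prod.GameAdd (flip (TransGen Step)) (flip (TransGen Step)) (a', b') (a, b) ∧
      Reach (.pair a' b') t := by
  obtain ⟨u, v, hu, huv, hv⟩ := h
  obtain ⟨C, hCu, hCv, hC, p, hp, hred⟩ := components_red huv
  have hrel : Rel (fun c q => SeqStar c q.1) (components a + components b) C := by
    rw [← rel_map_right, hCu]
    exact components_seqStar hu
  obtain ⟨Ca, Cb, hCa, hCb, rfl⟩ := rel_add_left.mp hrel
  have hCa' : ∀ q ∈ Ca, Red q.1 q.2 ∨ q.1 = q.2 := fun q hq => hC q (mem_add.mpr (.inl hq))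
  have hCb' : ∀ q ∈ Cb, Red q.1 q.2 ∨ q.1 = q.2 := fun q hq => hC q (mem_add.mpr (.inr hq))
  have hv' :
      SeqStar (.pair (pairMultiset (Ca.map Prod.snd)) (pairMultiset (Cb.map Prod.snd))) t := by
    refine (seqStar_of_components_eq ?_).trans hv
    rw [← hCv, components, components_pairMultiset_map_snd hCa,
      components_pairMultiset_map_snd hCb, add_bind]
  rcases mem_add.mp hp with hpa | hpb
  · exact ⟨_, b, .fst (transGen_pairMultiset_map_snd hCa hCa' hpa hred),
      (Reach.pair .refl (reach_pairMultiset_map_snd hCb hCb')).trans (.of_seqStar hv')⟩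
  · exact ⟨a, _, .snd (transGen_pairMultiset_map_snd hCb hCb' hpb hred),
      (Reach.pair (reach_pairMultiset_map_snd hCa hCa') .refl).trans (.of_seqStar hv')⟩

end Decomposition

/-- A pair of strongly normalising terms is strongly normalising. -/
theorem sn_pair (r₁ r₂ : Tm) (h1 : SN r₁) (h2 : SN r₂) : SN (.pair r₁ r₂) := by
  suffices ∀ p : Tm × Tm, Acc (Prod.GameAdd (flip (TransGen Step)) (flip (TransGen Step))) p →
      SN (.pair p.1 p.2) from
    this _ (h1.acc_transGen.prod_gameAdd h2.acc_transGen)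
  intro p hp
  induction hp with
  | intro p _ ih =>
    refine ⟨_, fun t ht => ?_⟩
    obtain ⟨a', b', hlt, hreach⟩ := exists_gameAdd_reach_of_step_pair ht
    exact (ih _ hlt).of_reach hreach
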